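/- Projections kill Efron-Stein components outside their support: if X is a d-partite (q,γ)-product and T, S ⊆ [d] with S ⊄ T, then ‖E_T f^{=S}‖_q ≤ |T| 2^{O(|S|)} γ ‖f‖_q. -/

import Mathlib

open Finset BigOperators

/-- Conditional expectation operator `E_T` on a `d`-partite space:
`E_T f (x) = E[f(y) | y_T = x_T]` under the (finitely supported) measure `μ`. -/
noncomputable def projE {d : ℕ} {Ω : Type} [Fintype Ω] [DecidableEq Ω]
    (μ : (Fin d → Ω) → ℝ) (T : Finset (Fin d))
    (f : (Fin d → Ω) → ℝ) (x : Fin d → Ω) : ℝ :=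
  (∑ y : Fin d → Ω, if ∀ i ∈ T, y i = x i then μ y * f y else 0) /
  (∑ y : Fin d → Ω, if ∀ i ∈ T, y i = x i then μ y else 0)

/-- Efron–Stein component `f^{=S} = ∑_{T ⊆ S} (-1)^{|S|-|T|} E_T f`. -/
noncomputable def esComp {d : ℕ} {Ω : Type} [Fintype Ω] [DecidableEq Ω]
    (μ : (Fin d → Ω) → ℝ) (S : Finset (Fin d))
    (f : (Fin d → Ω) → ℝ) : (Fin d → Ω) → ℝ :=
  fun x => ∑ T ∈ S.powerset, (-1 : ℝ) ^ (S.card - T.card) * projE μ T f x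

/-- `L^q` norm with respect to the probability mass function `μ`. -/
noncomputable def pnorm {α : Type} [Fintype α] (μ : α → ℝ) (q : ℝ) (f : α → ℝ) : ℝ :=
  (∑ x, μ x * |f x| ^ q) ^ (1 / q)

/-- Conditional (link) measure obtained from `μ` by conditioning the coordinates
in `R` to agree with `z`. -/
noncomputable def condMeasure {d : ℕ} {Ω : Type} [Fintype Ω] [DecidableEq Ω]
    (μ : (Fin d → Ω) → ℝ) (R : Finset (Fin d)) (z : Fin d → Ω) :
    (Fin d → Ω) → ℝ :=
  fun y => (if ∀ i ∈ R, y i = z i then μ y else 0) /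
    (∑ y' : Fin d → Ω, if ∀ i ∈ R, y' i = z i then μ y' else 0)

/-- Expectation with respect to the mass function `μ`. -/
noncomputable def expect {α : Type} [Fintype α] (μ : α → ℝ) (f : α → ℝ) : ℝ :=
  ∑ x, μ x * f x

/-- `X` is a `(q,γ)`-product: in every link of codimension at least `2`
(conditioning the coordinates in `R` on `z`), for every pair of distinct colors
`i, j ∉ R`, the bipartite walk from color `i` to color `j` is a `q`-norm
expander: `‖A^τ_{i,j} g − Π^τ_{i,j} g‖_q ≤ γ ‖g‖_q` for every function `g` of
the `i`-th coordinate. -/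
def IsQGammaProduct {d : ℕ} {Ω : Type} [Fintype Ω] [DecidableEq Ω]
    (μ : (Fin d → Ω) → ℝ) (q γ : ℝ) : Prop :=
  ∀ (R : Finset (Fin d)) (z : Fin d → Ω), R.card + 2 ≤ d →
    ∀ i j : Fin d, i ∉ R → j ∉ R → i ≠ j →
      ∀ g : (Fin d → Ω) → ℝ, (∀ x y, x i = y i → g x = g y) →
        pnorm (condMeasure μ R z) q
            (fun x => projE (condMeasure μ R z) {j} g x - expect (condMeasure μ R z) g)
          ≤ γ * pnorm (condMeasure μ R z) q g

/-!
Expanding `f^{=S}` and using linearity, `E_T f^{=S} = ∑_{T' ⊆ S} ± E_T E_{T'} f`. Some `s ∈ S`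
lies outside `T`, so the terms `± E_{T ∩ T'} f` cancel in pairs `T' ↔ T' ∪ {s}`, and
`E_T f^{=S} = ∑_{T' ⊆ S} ± (E_T E_{T'} f - E_{T ∩ T'} f)`. It remains to bound each difference
by `γ |T| |T'| ‖f‖_q`.

Write `T = A ∪ R`, `T' = B ∪ R` with `R = T ∩ T'`. Peeling off one coordinate of `A`, and then
one of `B`, at a time, `E_{A ∪ R} E_{B ∪ R} f - E_R f` telescopes into `|A| |B|` contractions of
differences `E_{R' ∪ {j}} E_{R' ∪ {i}} g - E_{R'} g`. In the link of `R'` at a point, such a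
difference is the colour walk `A_{i,j} - Π` applied to the function `E_i g` of the `i`-th
coordinate, so the product hypothesis bounds it by `γ ‖g‖_q` in every link, and averaging over the
links gives the same bound globally.
-/

lemma sum_powerset_neg_one_pow_smul_eq_zero {α R M : Type*} [DecidableEq α] [Ring R]
    [AddCommGroup M] [Module R M] {S : Finset α} {s : α} (hs : s ∈ S) (φ : Finset α → M)
    (hφ : ∀ X, φ (insert s X) = φ X) :
    ∑ X ∈ S.powerset, (-1 : R) ^ (S.card - X.card) • φ X = 0 := by
  rw [← Finset.insert_erase hs, Finset.sum_powerset_insert (Finset.notMem_erase s S),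
    ← Finset.sum_add_distrib]
  refine Finset.sum_eq_zero fun X hX => ?_
  have hsX : s ∉ X := fun h => Finset.notMem_erase s S (Finset.mem_powerset.1 hX h)
  have hcard : X.card ≤ (S.erase s).card := Finset.card_le_card (Finset.mem_powerset.1 hX)
  rw [hφ, Finset.card_insert_of_notMem (Finset.notMem_erase s S),
    Finset.card_insert_of_notMem hsX, Nat.succ_sub hcard, Nat.add_sub_add_right, pow_succ]
  simp

section Lq

variable {α : Type} {μ : α → ℝ} {q : ℝ} {f g : α → ℝ}

/-- `pnorm μ q f` is the `PiLp` norm of `μ ^ (1 / q) * f` (`pnorm_eq_norm_weightedLp`), which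
provides Minkowski's inequality. -/
noncomputable def weightedLp (μ : α → ℝ) (q : ℝ) :
    (α → ℝ) →ₗ[ℝ] PiLp (ENNReal.ofReal q) (fun _ : α => ℝ) :=
  (WithLp.linearEquiv _ ℝ (α → ℝ)).symm.toLinearMap ∘ₗ
    LinearMap.pi fun x => (μ x ^ (1 / q)) • LinearMap.proj x

lemma weightedLp_apply (x : α) : weightedLp μ q f x = μ x ^ (1 / q) * f x := rfl

variable [Fintype α]

lemma pnorm_eq_norm_weightedLp (hμ : ∀ x, 0 ≤ μ x) (hq : 0 < q) :
    pnorm μ q f = ‖weightedLp μ q f‖ := by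
  have hq' : (ENNReal.ofReal q).toReal = q := ENNReal.toReal_ofReal hq.le
  rw [PiLp.norm_eq_sum (by rwa [hq']), hq', pnorm]
  congr 1
  refine Finset.sum_congr rfl fun x _ => ?_
  rw [weightedLp_apply, Real.norm_eq_abs, abs_mul, abs_of_nonneg (Real.rpow_nonneg (hμ x) _),
    Real.mul_rpow (Real.rpow_nonneg (hμ x) _) (abs_nonneg _), ← Real.rpow_mul (hμ x),
    one_div_mul_cancel hq.ne', Real.rpow_one]

lemma pnorm_nonneg (hμ : ∀ x, 0 ≤ μ x) : 0 ≤ pnorm μ q f :=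
  Real.rpow_nonneg (Finset.sum_nonneg fun x _ =>
    mul_nonneg (hμ x) (Real.rpow_nonneg (abs_nonneg _) q)) _

lemma pnorm_rpow (hμ : ∀ x, 0 ≤ μ x) (hq : q ≠ 0) :
    pnorm μ q f ^ q = expect μ (fun x => |f x| ^ q) := by
  rw [pnorm, ← Real.rpow_mul (Finset.sum_nonneg fun x _ =>
    mul_nonneg (hμ x) (Real.rpow_nonneg (abs_nonneg _) q)), one_div_mul_cancel hq,
    Real.rpow_one, _root_.expect]

lemma pnorm_congr (h : ∀ x, μ x ≠ 0 → f x = g x) : pnorm μ q f = pnorm μ q g := by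
  unfold pnorm
  congr 1
  refine Finset.sum_congr rfl fun x _ => ?_
  by_cases hx : μ x = 0
  · simp [hx]
  · rw [h x hx]

lemma pnorm_eq_zero_of_eq_zero_on_support (hq : q ≠ 0) (h : ∀ x, μ x ≠ 0 → f x = 0) :
    pnorm μ q f = 0 := by
  rw [pnorm_congr (g := 0) h]
  simp [pnorm, Real.zero_rpow hq, Real.zero_rpow (inv_ne_zero hq)]

lemma pnorm_sum_le {ι : Type*} (hμ : ∀ x, 0 ≤ μ x) (hq : 1 ≤ q) (s : Finset ι)
    (F : ι → α → ℝ) : pnorm μ q (∑ i ∈ s, F i) ≤ ∑ i ∈ s, pnorm μ q (F i) := by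
  have : Fact (1 ≤ ENNReal.ofReal q) := ⟨by simpa using hq⟩
  simp only [pnorm_eq_norm_weightedLp hμ (by linarith : (0 : ℝ) < q), map_sum]
  exact norm_sum_le _ _

lemma pnorm_add_le (hμ : ∀ x, 0 ≤ μ x) (hq : 1 ≤ q) :
    pnorm μ q (f + g) ≤ pnorm μ q f + pnorm μ q g := by
  have : Fact (1 ≤ ENNReal.ofReal q) := ⟨by simpa using hq⟩
  simp only [pnorm_eq_norm_weightedLp hμ (by linarith : (0 : ℝ) < q), map_add]
  exact norm_add_le _ _

lemma pnorm_smul (hμ : ∀ x, 0 ≤ μ x) (hq : 1 ≤ q) (c : ℝ) :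
    pnorm μ q (c • f) = |c| * pnorm μ q f := by
  have : Fact (1 ≤ ENNReal.ofReal q) := ⟨by simpa using hq⟩
  simp only [pnorm_eq_norm_weightedLp hμ (by linarith : (0 : ℝ) < q), map_smul, norm_smul,
    Real.norm_eq_abs]

lemma abs_expect_rpow_le (hμ : ∀ x, 0 ≤ μ x) (hμ1 : ∑ x, μ x = 1) (hq : 1 ≤ q) :
    |expect μ f| ^ q ≤ expect μ (fun x => |f x| ^ q) := by
  calc |expect μ f| ^ q ≤ (expect μ fun x => |f x|) ^ q := by
        refine Real.rpow_le_rpow (abs_nonneg _) ((Finset.abs_sum_le_sum_abs _ _).trans ?_)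
          (by linarith)
        simp [_root_.expect, abs_mul, abs_of_nonneg (hμ _)]
    _ ≤ _ := Real.rpow_arith_mean_le_arith_mean_rpow (s := Finset.univ) _ _ (fun x _ => hμ x) hμ1
        (fun x _ => abs_nonneg _) hq

end Lq

section Projections

variable {d : ℕ} {Ω : Type} [Fintype Ω] [DecidableEq Ω] {μ : (Fin d → Ω) → ℝ}
  {A B R T : Finset (Fin d)} {f g : (Fin d → Ω) → ℝ} {x y z : Fin d → Ω}

noncomputable def projEₗ (μ : (Fin d → Ω) → ℝ) (T : Finset (Fin d)) :
    ((Fin d → Ω) → ℝ) →ₗ[ℝ] (Fin d → Ω) → ℝ where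
  toFun := projE μ T
  map_add' f g := by
    ext x
    simp only [projE, Pi.add_apply, ← add_div, ← Finset.sum_add_distrib, mul_add]
    congr 1
    exact Finset.sum_congr rfl fun y _ => by split_ifs <;> simp
  map_smul' c f := by
    ext x
    simp only [projE, Pi.smul_apply, smul_eq_mul, RingHom.id_apply, mul_div_assoc',
      Finset.mul_sum]
    congr 1
    exact Finset.sum_congr rfl fun y _ => by split_ifs <;> ring

lemma projEₗ_apply : projEₗ μ T f = projE μ T f := rfl

lemma projE_sub : projE μ T (f - g) = projE μ T f - projE μ T g := map_sub (projEₗ μ T) f g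

lemma dependsOn_sum_agree (φ : (Fin d → Ω) → ℝ) :
    DependsOn (fun x => ∑ y, if ∀ i ∈ T, y i = x i then φ y else 0) T := by
  intro x x' h
  have hagree : ∀ y : Fin d → Ω, (∀ i ∈ T, y i = x i) ↔ ∀ i ∈ T, y i = x' i :=
    fun y => forall₂_congr fun i hi => by rw [h i hi]
  simp only [hagree]

lemma dependsOn_projE : DependsOn (projE μ T f) T := fun _ _ h =>
  congr_arg₂ (· / ·) (dependsOn_sum_agree (fun y => μ y * f y) h) (dependsOn_sum_agree μ h)

lemma projE_congr (h : ∀ y, μ y ≠ 0 → f y = g y) : projE μ T f = projE μ T g := by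
  ext x
  unfold projE
  congr 1
  refine Finset.sum_congr rfl fun y _ => ?_
  by_cases hy : μ y = 0
  · simp [hy]
  · rw [h y hy]

lemma sum_agree_ne_zero (hμ : ∀ x, 0 ≤ μ x) (hx : μ x ≠ 0) :
    (∑ y, if ∀ i ∈ T, y i = x i then μ y else 0) ≠ 0 := by
  have hle := Finset.single_le_sum (f := fun y => if ∀ i ∈ T, y i = x i then μ y else 0)
    (fun y _ => by split_ifs <;> simp [hμ y]) (Finset.mem_univ x)
  simp only [implies_true, if_true] at hle
  exact (lt_of_lt_of_le (lt_of_le_of_ne (hμ x) (Ne.symm hx)) hle).ne'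

lemma projE_of_dependsOn (hμ : ∀ x, 0 ≤ μ x) (hf : DependsOn f T) (hx : μ x ≠ 0) :
    projE μ T f x = f x := by
  rw [projE, div_eq_iff (sum_agree_ne_zero hμ hx), Finset.mul_sum]
  refine Finset.sum_congr rfl fun y _ => ?_
  split_ifs with hy
  · rw [hf hy, mul_comm]
  · rw [mul_zero]

lemma expect_mul_projE (hμ : ∀ x, 0 ≤ μ x) (hg : DependsOn g T) :
    expect μ (fun x => g x * projE μ T f x) = expect μ (fun x => g x * f x) := by
  set D : (Fin d → Ω) → ℝ := fun x => ∑ y, if ∀ i ∈ T, y i = x i then μ y else 0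
  -- on each fibre `{x | ∀ i ∈ T, x i = y i}` both `g` and the normaliser `D` are constant
  have hfiber : ∀ y, (∑ x, if ∀ i ∈ T, y i = x i then μ x * g x / D x * (μ y * f y) else 0)
      = μ y * (g y * f y) := by
    intro y
    have hcongr : ∀ x, (if ∀ i ∈ T, y i = x i then μ x * g x / D x * (μ y * f y) else 0)
        = (if ∀ i ∈ T, x i = y i then μ x else 0) * (g y / D y * (μ y * f y)) := by
      intro x
      by_cases hxy : ∀ i ∈ T, x i = y i
      · have hyx : ∀ i ∈ T, y i = x i := fun i hi => (hxy i hi).symm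
        have hDxy : D x = D y := dependsOn_sum_agree μ hxy
        rw [if_pos hyx, if_pos hxy, hg hxy, hDxy]
        ring
      · rw [if_neg fun h => hxy fun i hi => (h i hi).symm, if_neg hxy, zero_mul]
    rw [Finset.sum_congr rfl fun x _ => hcongr x, ← Finset.sum_mul]
    by_cases hy : μ y = 0
    · simp [hy]
    · have hDy : D y ≠ 0 := sum_agree_ne_zero hμ hy
      change D y * (g y / D y * (μ y * f y)) = _
      field_simp
  calc expect μ (fun x => g x * projE μ T f x)
      = ∑ x, ∑ y, if ∀ i ∈ T, y i = x i then μ x * g x / D x * (μ y * f y) else 0 := by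
        unfold _root_.expect
        refine Finset.sum_congr rfl fun x _ => ?_
        change μ x * (g x * ((∑ y, _) / D x)) = _
        rw [Finset.sum_div, Finset.mul_sum, Finset.mul_sum]
        exact Finset.sum_congr rfl fun y _ => by split_ifs <;> ring
    _ = ∑ y, ∑ x, if ∀ i ∈ T, y i = x i then μ x * g x / D x * (μ y * f y) else 0 :=
        Finset.sum_comm
    _ = expect μ (fun x => g x * f x) := Finset.sum_congr rfl fun y _ => hfiber y

lemma expect_projE (hμ : ∀ x, 0 ≤ μ x) : expect μ (projE μ T f) = expect μ f := by
  simpa using expect_mul_projE (g := fun _ => 1) (f := f) hμ (fun _ _ _ => rfl)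

lemma projE_projE_of_subset (hμ : ∀ x, 0 ≤ μ x) (hAB : A ⊆ B) :
    projE μ A (projE μ B f) = projE μ A f := by
  ext x
  have hind : DependsOn (fun y => if ∀ i ∈ A, y i = x i then (1 : ℝ) else 0) B := by
    intro y y' h
    have hagree : (∀ i ∈ A, y i = x i) ↔ ∀ i ∈ A, y' i = x i :=
      forall₂_congr fun i hi => by rw [h i (hAB hi)]
    simp only [hagree]
  have := expect_mul_projE (f := f) hμ hind
  simp only [_root_.expect, mul_ite, ite_mul, one_mul, mul_zero, zero_mul] at this
  rw [projE, projE, this]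

end Projections

section Links

variable {d : ℕ} {Ω : Type} [Fintype Ω] [DecidableEq Ω] {μ : (Fin d → Ω) → ℝ}
  {A R T : Finset (Fin d)} {f F G : (Fin d → Ω) → ℝ} {x y z : Fin d → Ω} {q K : ℝ}

lemma condMeasure_nonneg (hμ : ∀ x, 0 ≤ μ x) : 0 ≤ condMeasure μ R z y :=
  div_nonneg (by split_ifs <;> simp [hμ y])
    (Finset.sum_nonneg fun y' _ => by split_ifs <;> simp [hμ y'])

lemma sum_condMeasure (hμ : ∀ x, 0 ≤ μ x) (hz : μ z ≠ 0) : ∑ y, condMeasure μ R z y = 1 := by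
  unfold condMeasure
  rw [← Finset.sum_div, div_self (sum_agree_ne_zero hμ hz)]

lemma agree_of_condMeasure_ne_zero (hy : condMeasure μ R z y ≠ 0) : ∀ i ∈ R, y i = z i := by
  by_contra h
  simp [condMeasure, h] at hy

lemma projE_eq_expect_condMeasure : projE μ T f x = expect (condMeasure μ T x) f := by
  rw [projE, Finset.sum_div, _root_.expect]
  exact Finset.sum_congr rfl fun y _ => by unfold condMeasure; split_ifs <;> ring

lemma projE_union_eq_projE_condMeasure (hy : condMeasure μ R z y ≠ 0) :
    projE μ (A ∪ R) f y = projE (condMeasure μ R z) A f y := by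
  have hyz := agree_of_condMeasure_ne_zero hy
  have hc : (∑ y', if ∀ i ∈ R, y' i = z i then μ y' else 0) ≠ 0 := by
    rintro h
    simp [condMeasure, h] at hy
  have hagree : ∀ v : Fin d → Ω,
      ((∀ i ∈ A, v i = y i) ∧ ∀ i ∈ R, v i = z i) ↔ ∀ i ∈ A ∪ R, v i = y i := by
    intro v
    simp only [Finset.mem_union, or_imp, forall_and]
    exact and_congr_right' (forall₂_congr fun i hi => by rw [hyz i hi])
  have hsum : ∀ φ : (Fin d → Ω) → ℝ,
      (∑ v, if ∀ i ∈ A, v i = y i then condMeasure μ R z v * φ v else 0)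
        = (∑ v, if ∀ i ∈ A ∪ R, v i = y i then μ v * φ v else 0) /
          ∑ y', if ∀ i ∈ R, y' i = z i then μ y' else 0 := by
    intro φ
    rw [Finset.sum_div]
    refine Finset.sum_congr rfl fun v _ => ?_
    unfold condMeasure
    by_cases h : ∀ i ∈ A ∪ R, v i = y i
    · obtain ⟨hA, hR⟩ := (hagree v).2 h
      rw [if_pos hA, if_pos hR, if_pos h]
      ring
    · rw [if_neg h, zero_div]
      split_ifs with hA hR
      · exact absurd ((hagree v).1 ⟨hA, hR⟩) h
      all_goals simp
  have hden := hsum fun _ => 1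
  simp only [mul_one] at hden
  rw [projE, projE, hsum f, hden, div_div_div_cancel_right₀ hc]

lemma abs_projE_rpow_le (hμ : ∀ x, 0 ≤ μ x) (hq : 1 ≤ q) (hx : μ x ≠ 0) :
    |projE μ T f x| ^ q ≤ projE μ T (fun y => |f y| ^ q) x := by
  rw [projE_eq_expect_condMeasure, projE_eq_expect_condMeasure]
  exact abs_expect_rpow_le (fun _ => condMeasure_nonneg hμ) (sum_condMeasure hμ hx) hq

lemma pnorm_projE_le (hμ : ∀ x, 0 ≤ μ x) (hq : 1 ≤ q) :
    pnorm μ q (projE μ T f) ≤ pnorm μ q f := by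
  have hq0 : (0 : ℝ) < q := by linarith
  rw [← Real.rpow_le_rpow_iff (pnorm_nonneg hμ) (pnorm_nonneg hμ) hq0, pnorm_rpow hμ hq0.ne',
    pnorm_rpow hμ hq0.ne']
  calc expect μ (fun x => |projE μ T f x| ^ q)
      ≤ expect μ (projE μ T fun y => |f y| ^ q) := by
        refine Finset.sum_le_sum fun x _ => ?_
        by_cases hx : μ x = 0
        · simp [hx]
        · exact mul_le_mul_of_nonneg_left (abs_projE_rpow_le hμ hq hx) (hμ x)
    _ = expect μ (fun x => |f x| ^ q) := expect_projE hμ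

lemma pnorm_rpow_eq_sum_condMeasure (hμ : ∀ x, 0 ≤ μ x) (hq : q ≠ 0) :
    pnorm μ q F ^ q = ∑ z, μ z * pnorm (condMeasure μ R z) q F ^ q := by
  simp only [pnorm_rpow hμ hq, pnorm_rpow (fun _ => condMeasure_nonneg hμ) hq,
    ← projE_eq_expect_condMeasure]
  exact (expect_projE hμ).symm

lemma pnorm_le_of_forall_condMeasure (hμ : ∀ x, 0 ≤ μ x) (hq : 0 < q) (hK : 0 ≤ K)
    (h : ∀ z, μ z ≠ 0 →
      pnorm (condMeasure μ R z) q F ≤ K * pnorm (condMeasure μ R z) q G) :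
    pnorm μ q F ≤ K * pnorm μ q G := by
  have hν : ∀ z, ∀ y, 0 ≤ condMeasure μ R z y := fun _ _ => condMeasure_nonneg hμ
  rw [← Real.rpow_le_rpow_iff (pnorm_nonneg hμ) (mul_nonneg hK (pnorm_nonneg hμ)) hq,
    Real.mul_rpow hK (pnorm_nonneg hμ), pnorm_rpow_eq_sum_condMeasure (R := R) hμ hq.ne',
    pnorm_rpow_eq_sum_condMeasure (R := R) hμ hq.ne', Finset.mul_sum]
  refine Finset.sum_le_sum fun z _ => ?_
  by_cases hz : μ z = 0
  · simp [hz]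
  · rw [mul_left_comm, ← Real.mul_rpow hK (pnorm_nonneg (hν z))]
    exact mul_le_mul_of_nonneg_left
      (Real.rpow_le_rpow (pnorm_nonneg (hν z)) (h z hz) hq.le) (hμ z)

end Links

section Estimates

variable {d : ℕ} {Ω : Type} [Fintype Ω] [DecidableEq Ω] {μ : (Fin d → Ω) → ℝ} {q γ : ℝ}

lemma pnorm_projE_insert_projE_insert_sub_le (hμ : ∀ x, 0 ≤ μ x) (hq : 1 ≤ q) (hγ : 0 ≤ γ)
    (hprod : IsQGammaProduct μ q γ) {R : Finset (Fin d)} {i j : Fin d} (hi : i ∉ R)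
    (hj : j ∉ R) (hij : i ≠ j) (f : (Fin d → Ω) → ℝ) :
    pnorm μ q (projE μ (insert j R) (projE μ (insert i R) f) - projE μ R f)
      ≤ γ * pnorm μ q f := by
  -- in the link `ν` of `R` at `z`, the difference is `A_{i,j} g - Π g` for the `i`-junta `g`
  refine pnorm_le_of_forall_condMeasure (R := R) hμ (by linarith) hγ fun z hz => ?_
  set ν := condMeasure μ R z
  have hν : ∀ y, 0 ≤ ν y := fun _ => condMeasure_nonneg hμ
  set g := projE ν {i} f
  have hcard : R.card + 2 ≤ d := by
    have := Finset.card_le_univ (insert i (insert j R))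
    rw [Finset.card_insert_of_notMem (by simp [hi, hij]), Finset.card_insert_of_notMem hj,
      Fintype.card_fin] at this
    omega
  have hg : ∀ x y, x i = y i → g x = g y := fun x y h => dependsOn_projE (by simpa using h)
  have hinner : ∀ u, ν u ≠ 0 → projE μ (insert i R) f u = g u := fun u hu => by
    rw [Finset.insert_eq, projE_union_eq_projE_condMeasure hu]
  have hlink : ∀ y, ν y ≠ 0 → (projE μ (insert j R) (projE μ (insert i R) f) - projE μ R f) y
      = projE ν {j} g y - expect ν g := by
    intro y hy
    rw [Pi.sub_apply, Finset.insert_eq, projE_union_eq_projE_condMeasure hy, projE_congr hinner,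
      dependsOn_projE (agree_of_condMeasure_ne_zero hy), projE_eq_expect_condMeasure (x := z),
      expect_projE hν]
  calc pnorm ν q (projE μ (insert j R) (projE μ (insert i R) f) - projE μ R f)
      = pnorm ν q (fun y => projE ν {j} g y - expect ν g) := pnorm_congr hlink
    _ ≤ γ * pnorm ν q g := hprod R z hcard i j hi hj hij g hg
    _ ≤ γ * pnorm ν q f := mul_le_mul_of_nonneg_left (pnorm_projE_le hν hq) hγ

lemma pnorm_projE_insert_projE_union_sub_le (hμ : ∀ x, 0 ≤ μ x) (hq : 1 ≤ q) (hγ : 0 ≤ γ)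
    (hprod : IsQGammaProduct μ q γ) {R B : Finset (Fin d)} {j : Fin d} (hjR : j ∉ R)
    (hjB : j ∉ B) (hBR : Disjoint B R) (f : (Fin d → Ω) → ℝ) :
    pnorm μ q (projE μ (insert j R) (projE μ (B ∪ R) f) - projE μ R f)
      ≤ γ * B.card * pnorm μ q f := by
  induction B using Finset.induction_on with
  | empty =>
    rw [pnorm_eq_zero_of_eq_zero_on_support (by linarith) fun x hx => ?_]
    · simp
    rw [Finset.empty_union, Pi.sub_apply,
      projE_of_dependsOn hμ (dependsOn_projE.mono (by simp)) hx, sub_self]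
  | insert i B hiB ih =>
    simp only [Finset.mem_insert, not_or] at hjB
    rw [Finset.disjoint_insert_left] at hBR
    set R' := B ∪ R
    have htower : projE μ (insert j R) (projE μ (insert j R') (projE μ (insert i R') f))
        = projE μ (insert j R) (projE μ (insert i R') f) :=
      projE_projE_of_subset hμ (Finset.insert_subset_insert _ Finset.subset_union_right)
    have hsplit : projE μ (insert j R) (projE μ (insert i B ∪ R) f) - projE μ R f
        = projE μ (insert j R) (projE μ (insert j R') (projE μ (insert i R') f) - projE μ R' f)
          + (projE μ (insert j R) (projE μ R' f) - projE μ R f) := by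
      rw [projE_sub, htower, Finset.insert_union]
      abel
    have hstep : pnorm μ q (projE μ (insert j R')
        (projE μ (insert i R') f) - projE μ R' f) ≤ γ * pnorm μ q f :=
      pnorm_projE_insert_projE_insert_sub_le hμ hq hγ hprod
        (by simp [R', hiB, hBR.1]) (by simp [R', hjB.2, hjR]) (Ne.symm hjB.1) f
    calc _ ≤ _ := hsplit ▸ pnorm_add_le hμ hq
      _ ≤ γ * pnorm μ q f + γ * B.card * pnorm μ q f :=
          add_le_add ((pnorm_projE_le hμ hq).trans hstep) (ih hjB.2 hBR.2)
      _ = γ * (insert i B).card * pnorm μ q f := by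
          rw [Finset.card_insert_of_notMem hiB]; push_cast; ring

lemma pnorm_projE_union_projE_union_sub_le (hμ : ∀ x, 0 ≤ μ x) (hq : 1 ≤ q) (hγ : 0 ≤ γ)
    (hprod : IsQGammaProduct μ q γ) {R A B : Finset (Fin d)} (hAB : Disjoint A B)
    (hAR : Disjoint A R) (hBR : Disjoint B R) (f : (Fin d → Ω) → ℝ) :
    pnorm μ q (projE μ (A ∪ R) (projE μ (B ∪ R) f) - projE μ R f)
      ≤ γ * A.card * B.card * pnorm μ q f := by
  induction A using Finset.induction_on with
  | empty =>
    rw [Finset.empty_union, projE_projE_of_subset hμ Finset.subset_union_right, sub_self,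
      pnorm_eq_zero_of_eq_zero_on_support (f := 0) (by linarith) fun _ _ => rfl]
    simp
  | insert j A hjA ih =>
    rw [Finset.disjoint_insert_left] at hAB hAR
    set g := projE μ (B ∪ R) f
    have hfixed : ∀ x, μ x ≠ 0 → projE μ (B ∪ (A ∪ R)) g x = g x := fun x hx =>
      projE_of_dependsOn hμ (dependsOn_projE.mono (Finset.coe_subset.2
        (Finset.union_subset_union_right Finset.subset_union_right))) hx
    have hstep : pnorm μ q (projE μ (insert j (A ∪ R)) g - projE μ (A ∪ R) g)
        ≤ γ * B.card * pnorm μ q f :=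
      calc _ = pnorm μ q (projE μ (insert j (A ∪ R)) (projE μ (B ∪ (A ∪ R)) g)
              - projE μ (A ∪ R) g) := by rw [projE_congr hfixed]
        _ ≤ γ * B.card * pnorm μ q g :=
            pnorm_projE_insert_projE_union_sub_le hμ hq hγ hprod (by simp [hjA, hAR.1]) hAB.1
              (Finset.disjoint_union_right.2 ⟨hAB.2.symm, hBR⟩) g
        _ ≤ γ * B.card * pnorm μ q f :=
            mul_le_mul_of_nonneg_left (pnorm_projE_le hμ hq) (by positivity)
    calc _ = pnorm μ q ((projE μ (insert j (A ∪ R)) g - projE μ (A ∪ R) g)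
            + (projE μ (A ∪ R) g - projE μ R f)) := by
          rw [Finset.insert_union, sub_add_sub_cancel]
      _ ≤ γ * B.card * pnorm μ q f + γ * A.card * B.card * pnorm μ q f :=
          (pnorm_add_le hμ hq).trans (add_le_add hstep (ih hAB.2 hAR.2))
      _ = γ * (insert j A).card * B.card * pnorm μ q f := by
          rw [Finset.card_insert_of_notMem hjA]; push_cast; ring

lemma pnorm_projE_projE_sub_projE_inter_le (hμ : ∀ x, 0 ≤ μ x) (hq : 1 ≤ q) (hγ : 0 ≤ γ)
    (hprod : IsQGammaProduct μ q γ) (T T' : Finset (Fin d)) (f : (Fin d → Ω) → ℝ) :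
    pnorm μ q (projE μ T (projE μ T' f) - projE μ (T ∩ T') f)
      ≤ γ * T.card * T'.card * pnorm μ q f := by
  have hsplit := pnorm_projE_union_projE_union_sub_le hμ hq hγ hprod disjoint_sdiff_sdiff
    (Finset.disjoint_sdiff_inter T T')
    (Finset.inter_comm T T' ▸ Finset.disjoint_sdiff_inter T' T) f
  rw [Finset.sdiff_union_inter, Finset.inter_comm, Finset.sdiff_union_inter,
    Finset.inter_comm] at hsplit
  refine hsplit.trans (mul_le_mul_of_nonneg_right ?_ (pnorm_nonneg hμ))
  gcongr <;> exact Finset.sdiff_subset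

lemma pnorm_projE_esComp_le (hμ : ∀ x, 0 ≤ μ x) (hq : 1 ≤ q) (hγ : 0 ≤ γ)
    (hprod : IsQGammaProduct μ q γ) {T S : Finset (Fin d)} (hST : ¬ S ⊆ T)
    (f : (Fin d → Ω) → ℝ) :
    pnorm μ q (projE μ T (esComp μ S f))
      ≤ 2 ^ S.card * S.card * T.card * γ * pnorm μ q f := by
  obtain ⟨s, hsS, hsT⟩ := Finset.not_subset.1 hST
  set c : Finset (Fin d) → ℝ := fun X => (-1) ^ (S.card - X.card)
  have hcancel : ∑ X ∈ S.powerset, c X • projE μ (T ∩ X) f = 0 :=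
    sum_powerset_neg_one_pow_smul_eq_zero hsS _ fun X => by
      rw [Finset.inter_insert_of_notMem hsT]
  have hexpand : projE μ T (esComp μ S f)
      = ∑ X ∈ S.powerset, c X • (projE μ T (projE μ X f) - projE μ (T ∩ X) f) := by
    have hES : esComp μ S f = ∑ X ∈ S.powerset, c X • projE μ X f := by
      ext x
      simp [esComp, c, Finset.sum_apply]
    rw [hES, ← projEₗ_apply, map_sum]
    simp only [map_smul, projEₗ_apply, smul_sub, Finset.sum_sub_distrib, hcancel, sub_zero]
  have hterm : ∀ X ∈ S.powerset,
      pnorm μ q (c X • (projE μ T (projE μ X f) - projE μ (T ∩ X) f))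
        ≤ γ * T.card * S.card * pnorm μ q f := by
    intro X hX
    rw [pnorm_smul hμ hq, abs_pow, abs_neg, abs_one, one_pow, one_mul]
    refine (pnorm_projE_projE_sub_projE_inter_le hμ hq hγ hprod T X f).trans ?_
    have := pnorm_nonneg (q := q) (f := f) hμ
    gcongr
    exact Finset.mem_powerset.1 hX
  calc _ ≤ _ := hexpand ▸ pnorm_sum_le hμ hq _ _
    _ ≤ ∑ X ∈ S.powerset, γ * T.card * S.card * pnorm μ q f := Finset.sum_le_sum hterm
    _ = _ := by rw [Finset.sum_const, Finset.card_powerset, nsmul_eq_mul]; push_cast; ring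

end Estimates

/-- projections kill Efron–Stein components outside their
support: there is a universal constant `C` such that on any `(q,γ)`-product,
if `S ⊄ T` then `‖E_T f^{=S}‖_q ≤ |T| · 2^{C·|S|} · γ · ‖f‖_q`. -/
theorem proj_kills_es_component :
    ∃ C : ℝ, 0 < C ∧
      ∀ (d : ℕ) (Ω : Type) [Fintype Ω] [DecidableEq Ω]
        (μ : (Fin d → Ω) → ℝ), (∀ x, 0 ≤ μ x) → (∑ x, μ x = 1) →
        ∀ q γ : ℝ, 1 < q → 0 ≤ γ → IsQGammaProduct μ q γ →
        ∀ (T S : Finset (Fin d)), ¬ S ⊆ T →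
        ∀ f : (Fin d → Ω) → ℝ,
          pnorm μ q (projE μ T (esComp μ S f))
            ≤ (T.card : ℝ) * 2 ^ (C * S.card) * γ * pnorm μ q f := by
  refine ⟨2, two_pos, fun d Ω _ _ μ hμ _ q γ hq hγ hprod T S hST f => ?_⟩
  have hS : (S.card : ℝ) ≤ 2 ^ S.card := by exact_mod_cast Nat.lt_two_pow_self.le
  have h2S : (2 : ℝ) ^ (2 * (S.card : ℝ)) = 2 ^ S.card * 2 ^ S.card := by
    rw [two_mul, Real.rpow_add two_pos, Real.rpow_natCast]
  calc _ ≤ 2 ^ S.card * S.card * T.card * γ * pnorm μ q f :=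
        pnorm_projE_esComp_le hμ hq.le hγ hprod hST f
    _ ≤ 2 ^ S.card * 2 ^ S.card * T.card * γ * pnorm μ q f := by
        gcongr
        exact pnorm_nonneg hμ
    _ = _ := by rw [h2S]; ring
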